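/- Let Q be a finite injective quandle, i.e. φ_Q : Q → G(Q) is injective. Then Inn(Q) is nilpotent if and only if there exist a finite nilpotent group G and an injective quandle morphism from Q to Conj(G). -/

import Mathlib

/-!
If `Inn(Q)` is nilpotent, so is `G(Q)`, because `G(Q) → Inn(Q)` has central kernel. For finite
`Q` that kernel has finite index, so the center of `G(Q)` is a finitely generated abelian subgroup
of finite index. Finitely generated abelian groups are residually finite (structure theorem), hence
so is `G(Q)`, and some finite quotient of `G(Q)`, nilpotent as a quotient of `G(Q)`, still
separates the finitely many points of `φ_Q(Q)`.

Conversely, an injective morphism `f : Q → Conj(G)` extends to `ψ : G(Q) → G`, and `ker ψ` acts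
trivially on `Q` since `f` intertwines the action of `G(Q)` with conjugation by `ψ`. So `Inn(Q)`
is a quotient of `G(Q) ⧸ ker ψ`, a subgroup of the nilpotent group `G`.
-/

open Quandles

/-- The group `Inn(Q)` of inner automorphisms of a quandle `Q`: the subgroup of the
permutation group of `Q` generated by the left translations `L_x : y ↦ x ◃ y`. -/
def quandleInn (Q : Type) [Quandle Q] : Subgroup (Equiv.Perm Q) :=
  Subgroup.closure (Set.range fun x : Q => (Rack.act' x : Equiv.Perm Q))

open Function

namespace Group

variable {G G' : Type*} [Group G] [Group G']

instance residuallyFinite_multiplicative_int : ResiduallyFinite (Multiplicative ℤ) := by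
  refine residuallyFinite_of_forall_exists_finite_monoidHom fun g hg => ?_
  set n : ℤ := Multiplicative.toAdd g
  refine ⟨Multiplicative (ZMod (n.natAbs + 1)), inferInstance, inferInstance,
    (Int.castAddHom _).toMultiplicative, fun h => hg ?_⟩
  have hn : (n : ZMod (n.natAbs + 1)) = 0 := h
  rw [ZMod.intCast_zmod_eq_zero_iff_dvd] at hn
  exact congrArg Multiplicative.ofAdd (Int.eq_zero_of_dvd_of_natAbs_lt_natAbs hn
    (show n.natAbs < ((n.natAbs + 1 : ℕ) : ℤ).natAbs by omega))

instance residuallyFinite_pi {ι : Type*} {H : ι → Type*} [∀ i, Group (H i)]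
    [∀ i, ResiduallyFinite (H i)] : ResiduallyFinite (∀ i, H i) := by
  rw [residuallyFinite_iff_forall_finiteIndexNormalSubgroup]
  intro g hg
  funext i
  exact eq_one_iff_forall_finiteIndexNormalSubroup (g i) fun K =>
    hg (K.comap (Pi.evalMonoidHom H i))

theorem ResiduallyFinite.of_injective [ResiduallyFinite G'] (f : G →* G') (hf : Injective f) :
    ResiduallyFinite G := by
  rw [residuallyFinite_iff_forall_finiteIndexNormalSubgroup]
  intro g hg
  exact hf <| (eq_one_iff_forall_finiteIndexNormalSubroup (f g) fun K => hg (K.comap f)).trans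
    (map_one f).symm

theorem ResiduallyFinite.of_finiteIndex (H : Subgroup G) [H.FiniteIndex] [ResiduallyFinite H] :
    ResiduallyFinite G := by
  rw [residuallyFinite_iff_exists_finiteIndex]
  intro g hg
  by_cases hgH : g ∈ H
  · obtain ⟨K, hK, hgK⟩ := residuallyFinite_iff_exists_finiteIndex.mp ‹_› (⟨g, hgH⟩ : H)
      (by simpa using hg)
    refine ⟨K.map H.subtype, ⟨?_⟩, ?_⟩
    · rw [Subgroup.index_map_subtype]
      exact mul_ne_zero hK.index_ne_zero Subgroup.FiniteIndex.index_ne_zero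
    · rwa [← Subgroup.mem_map_iff_mem H.subtype_injective] at hgK
  · exact ⟨H, ‹_›, hgH⟩

theorem ResiduallyFinite.exists_injOn [ResiduallyFinite G] {s : Set G} (hs : s.Finite) :
    ∃ N : FiniteIndexNormalSubgroup G, s.InjOn (QuotientGroup.mk : G → G ⧸ N.toSubgroup) := by
  let P : Set (G × G) := {p | p.1 ∈ s ∧ p.2 ∈ s ∧ p.1 ≠ p.2}
  have : Finite P := ((hs.prod hs).subset fun p hp => ⟨hp.1, hp.2.1⟩).to_subtype
  choose H hH using fun p : P => exists_finiteIndexNormalSubgroup_of_residuallyFinite _ _ p.2.2.2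
  let χ : G →* ∀ p : P, G ⧸ (H p).toSubgroup :=
    MonoidHom.pi fun p => QuotientGroup.mk' (H p).toSubgroup
  refine ⟨.ofSubgroup χ.ker, fun x hx y hy hxy => ?_⟩
  by_contra hne
  rw [FiniteIndexNormalSubgroup.toSubgroup_ofSubgroup, QuotientGroup.eq, MonoidHom.mem_ker,
    map_mul, map_inv, inv_mul_eq_one] at hxy
  exact hH ⟨(x, y), hx, hy, hne⟩ (congrFun hxy _)

theorem isNilpotent_range_of_ker_le {A B C : Type*} [Group A] [Group B] [Group C]
    [IsNilpotent B] (ψ : A →* B) (ρ : A →* C) (h : ψ.ker ≤ ρ.ker) :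
    IsNilpotent ρ.range := by
  have : IsNilpotent (A ⧸ ψ.ker) :=
    nilpotent_of_mulEquiv (QuotientGroup.quotientKerEquivRange ψ).symm
  exact nilpotent_of_surjective
    (QuotientGroup.lift ψ.ker ρ.rangeRestrict (by rwa [MonoidHom.ker_rangeRestrict]))
    (QuotientGroup.lift_surjective_of_surjective _ _ ρ.rangeRestrict_surjective _)

end Group

theorem CommGroup.residuallyFinite_of_fg (G : Type*) [CommGroup G] [Group.FG G] :
    Group.ResiduallyFinite G := by
  obtain ⟨ι, j, _, _, p, hp, e, ⟨E⟩⟩ := CommGroup.equiv_free_prod_prod_multiplicative_zmod G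
  have (i : ι) : NeZero (p i ^ e i) := ⟨pow_ne_zero _ (hp i).ne_zero⟩
  exact Group.ResiduallyFinite.of_injective E.toMonoidHom E.injective

namespace Rack

variable {R : Type*} [Rack R]

theorem closure_range_toEnvelGroup : Subgroup.closure (Set.range (toEnvelGroup R)) = ⊤ := by
  refine (Subgroup.eq_top_iff' _).mpr fun g => Quotient.inductionOn g fun a => ?_
  induction a with
  | unit => exact one_mem _
  | incl x => exact Subgroup.subset_closure ⟨x, rfl⟩
  | mul a b ha hb => exact mul_mem ha hb
  | inv a ha => exact inv_mem ha

theorem map_envelAction {G : Type*} [Group G] (f : R →◃ Quandle.Conj G) (g : EnvelGroup R)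
    (x : R) : f (envelAction g x) = toEnvelGroup.map f g * f x * (toEnvelGroup.map f g)⁻¹ := by
  have hg : g ∈ Subgroup.closure (Set.range (toEnvelGroup R)) := by
    rw [closure_range_toEnvelGroup]; trivial
  induction hg using Subgroup.closure_induction generalizing x with
  | mem y hy =>
    obtain ⟨z, rfl⟩ := hy
    exact (f.map_act (x := z) (y := x))
  | one => simp
  | mul a b _ _ iha ihb => simp [iha, ihb, mul_assoc]
  | inv a _ ih =>
    have h := ih (envelAction a⁻¹ x)
    rw [← Equiv.Perm.mul_apply, ← map_mul, mul_inv_cancel, map_one, Equiv.Perm.one_apply] at h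
    rw [h, map_inv (toEnvelGroup.map f)]
    group

theorem toEnvelGroup_map_toEnvelGroup :
    toEnvelGroup.map (toEnvelGroup R) = MonoidHom.id (EnvelGroup R) :=
  (toEnvelGroup.univ_uniq _ _ _ _ (by ext; rfl)).symm

theorem conj_toEnvelGroup (g : EnvelGroup R) (x : R) :
    g * toEnvelGroup R x * g⁻¹ = toEnvelGroup R (envelAction g x) := by
  simpa [toEnvelGroup_map_toEnvelGroup] using (map_envelAction (toEnvelGroup R) g x).symm

theorem ker_envelAction_le_center :
    (envelAction (R := R)).ker ≤ Subgroup.center (EnvelGroup R) := by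
  intro g hg
  rw [Subgroup.center_eq_iInf closure_range_toEnvelGroup]
  simp only [Subgroup.mem_iInf, Subgroup.mem_centralizer_singleton_iff, Set.forall_mem_range]
  intro x
  rw [← mul_inv_eq_iff_eq_mul, conj_toEnvelGroup, hg, Equiv.Perm.one_apply]

theorem ker_map_le_ker_envelAction {G : Type*} [Group G] (f : R →◃ Quandle.Conj G)
    (hf : Injective f) : (toEnvelGroup.map f).ker ≤ (envelAction (R := R)).ker := by
  intro g hg
  ext x
  apply hf
  rw [map_envelAction, hg]
  simp

variable (R) in
open scoped IsMulCommutative in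
theorem residuallyFinite_envelGroup [Finite R] : Group.ResiduallyFinite (EnvelGroup R) := by
  have : Group.FG (EnvelGroup R) :=
    Group.fg_iff.mpr ⟨_, closure_range_toEnvelGroup, Set.finite_range _⟩
  have : (Subgroup.center (EnvelGroup R)).FiniteIndex :=
    Subgroup.finiteIndex_of_le ker_envelAction_le_center
  have := CommGroup.residuallyFinite_of_fg (Subgroup.center (EnvelGroup R))
  exact .of_finiteIndex (Subgroup.center (EnvelGroup R))

variable (R) in
theorem isNilpotent_envelGroup [Group.IsNilpotent (envelAction (R := R)).range] :
    Group.IsNilpotent (EnvelGroup R) :=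
  Subgroup.isNilpotent_of_ker_le_center envelAction.rangeRestrict
    (by rw [MonoidHom.ker_rangeRestrict]; exact ker_envelAction_le_center)

end Rack

theorem range_envelAction_eq_quandleInn (Q : Type) [Quandle Q] :
    (Rack.envelAction (R := Q)).range = quandleInn Q := by
  rw [MonoidHom.range_eq_map, ← Rack.closure_range_toEnvelGroup, MonoidHom.map_closure,
    ← Set.range_comp]
  rfl

/-- a finite injective quandle `Q` has nilpotent `Inn(Q)` iff `Q` embeds
(as a quandle, for conjugation) into some finite nilpotent group. -/
theorem finite_injective_quandle_nilpotent_iff_embeds (Q : Type) [Quandle Q] [Fintype Q]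
    (hinj : Function.Injective (Rack.toEnvelGroup Q)) :
    Group.IsNilpotent (quandleInn Q) ↔
      ∃ (G : Type) (_ : Group G) (_ : Fintype G), Group.IsNilpotent G ∧
        ∃ f : Q → G, Function.Injective f ∧
          ∀ x y : Q, f (x ◃ y) = f x * f y * (f x)⁻¹ := by
  rw [← range_envelAction_eq_quandleInn]
  constructor
  · intro _
    have := Rack.isNilpotent_envelGroup Q
    have := Rack.residuallyFinite_envelGroup Q
    obtain ⟨N, hN⟩ :=
      Group.ResiduallyFinite.exists_injOn (Set.finite_range (Rack.toEnvelGroup Q))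
    refine ⟨_ ⧸ N.toSubgroup, inferInstance, Fintype.ofFinite _,
      Group.nilpotent_of_surjective _ (QuotientGroup.mk'_surjective _),
      (Quandle.Conj.map (QuotientGroup.mk' _)).comp (Rack.toEnvelGroup Q),
      fun x y hxy => hinj (hN ⟨x, rfl⟩ ⟨y, rfl⟩ hxy), fun x y => ShelfHom.map_act _⟩
  · rintro ⟨G, _, _, _, f, hf, hact⟩
    exact Group.isNilpotent_range_of_ker_le _ _
      (Rack.ker_map_le_ker_envelAction ⟨f, hact _ _⟩ hf)
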